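/- In the cascading-failure model, suppose V_src = V_ld = V (every vertex is both a source and a load). Then for every graph G obtained from G₀ by deleting vertices and/or edges and every edge {i,j} of G, load_G({i,j}) = 1/deg_G(i) + 1/deg_G(j), where deg_G denotes vertex degree in G. -/

import Mathlib

open scoped Classical

noncomputable section

variable {V : Type*} [Fintype V] [DecidableEq V]

/-- The number of shortest paths between `s` and `t` in `G` (σ_G(s,t)). -/
def numSP (G : SimpleGraph V) (s t : V) : ℕ :=
  Nat.card {w : G.Walk s t // w.length = G.dist s t}

/-- The number of shortest paths between `s` and `t` in `G` passing through edge `e`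
(σ_G(s,t | e)). -/
def numSPthru (G : SimpleGraph V) (s t : V) (e : Sym2 V) : ℕ :=
  Nat.card {w : G.Walk s t // w.length = G.dist s t ∧ e ∈ w.edges}

/-- `N_G(t)`: the vertices of `Vsrc \ {t}` reachable from `t` in `G` at minimum distance
from `t`. -/
def nearestSources (Vsrc : Finset V) (G : SimpleGraph V) (t : V) : Finset V :=
  ((Vsrc.erase t).filter (fun s => G.Reachable t s)).filter
    (fun s => ∀ s' ∈ (Vsrc.erase t).filter (fun s'' => G.Reachable t s''),
      G.dist t s ≤ G.dist t s')

/-- The load of edge `e` in `G`: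
`load_G(e) = Σ_{t ∈ Vld} Σ_{s ∈ N_G(t)} σ_G(s,t|e) / (|N_G(t)|·σ_G(s,t))`. -/
def eload (Vsrc Vld : Finset V) (G : SimpleGraph V) (e : Sym2 V) : ℝ :=
  ∑ t ∈ Vld, ∑ s ∈ nearestSources Vsrc G t,
    (numSPthru G s t e : ℝ) / (((nearestSources Vsrc G t).card : ℝ) * (numSP G s t : ℝ))

/-- The failure operator: removes every edge whose current load exceeds its capacity
`c_e = (1+α)·load_{G₀}(e)`. -/
def Fop (Vsrc Vld : Finset V) (G0 : SimpleGraph V) (α : ℝ) (G : SimpleGraph V) :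
    SimpleGraph V where
  Adj u v := G.Adj u v ∧ eload Vsrc Vld G s(u, v) ≤ (1 + α) * eload Vsrc Vld G0 s(u, v)
  symm := by
    constructor
    intro u v h
    refine ⟨h.1.symm, ?_⟩
    rw [Sym2.eq_swap]
    exact h.2
  loopless := ⟨fun v h => G.loopless.irrefl v h.1⟩

/-- `F*(G)`: the fixed point reached by iterating the failure operator (reached after at
most `|E|+1 ≤ (card V)^2` applications, since each non-trivial application removes an edge). -/
def Fstar (Vsrc Vld : Finset V) (G0 : SimpleGraph V) (α : ℝ) (G : SimpleGraph V) :
    SimpleGraph V :=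
  (Fop Vsrc Vld G0 α)^[Fintype.card V ^ 2] G

/-- `G − S`: the (induced) subgraph obtained by deleting the vertices of `S`. -/
def deleteVerts (G : SimpleGraph V) (S : Finset V) : SimpleGraph V where
  Adj u v := G.Adj u v ∧ u ∉ S ∧ v ∉ S
  symm := ⟨fun u v h => ⟨h.1.symm, h.2.2, h.2.1⟩⟩
  loopless := ⟨fun v h => G.loopless.irrefl v h.1⟩

/-- `disc(G)`: the number of load nodes from which no source (other than itself) is
reachable in `G`. -/
def disc (Vsrc Vld : Finset V) (G : SimpleGraph V) : ℕ :=
  (Vld.filter (fun t => ∀ s ∈ Vsrc, s ≠ t → ¬ G.Reachable t s)).card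

/-- The payoff `p(V_a,V_d) = disc(F*(G₀ − (V_a \ V_d)))`. -/
def payoff (Vsrc Vld : Finset V) (G0 : SimpleGraph V) (α : ℝ) (Va Vd : Finset V) : ℕ :=
  disc Vsrc Vld (Fstar Vsrc Vld G0 α (deleteVerts G0 (Va \ Vd)))

/-! When every vertex is a source, the nearest sources of a vertex `t` are its neighbours, each
joined to `t` by exactly one shortest path, the edge itself. So `t` spreads one unit of load
evenly over its `deg t` incident edges, and the edge `{i,j}` receives `1/deg i` from `i` and
`1/deg j` from `j`. -/

open SimpleGraph Finset

section ShortestPaths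

variable {G : SimpleGraph V} {s t : V}

omit [Fintype V] [DecidableEq V] in
theorem SimpleGraph.Adj.length_eq_dist_iff (h : G.Adj s t) {w : G.Walk s t} :
    w.length = G.dist s t ↔ w = h.toWalk := by
  rw [dist_eq_one_iff_adj.mpr h]
  exact ⟨fun hw => Walk.eq_of_length_le_one hw.le h.length_toWalk.le,
    fun hw => hw ▸ h.length_toWalk⟩

omit [Fintype V] [DecidableEq V] in
theorem numSP_of_adj (h : G.Adj s t) : numSP G s t = 1 := by
  simp_rw [numSP, h.length_eq_dist_iff, Nat.card_unique]

omit [Fintype V] in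
theorem numSPthru_of_adj (h : G.Adj s t) (e : Sym2 V) :
    numSPthru G s t e = if e = s(s, t) then 1 else 0 := by
  have hedges (w : G.Walk s t) : w = h.toWalk ∧ e ∈ w.edges ↔ w = h.toWalk ∧ e = s(s, t) :=
    and_congr_right fun hw => by simp [hw, h.edges_toWalk]
  simp_rw [numSPthru, h.length_eq_dist_iff, hedges]
  split_ifs with he <;> simp [he]

end ShortestPaths

theorem nearestSources_eq_neighborFinset
    {Vsrc : Finset V} {G : SimpleGraph V} {t : V} (hsrc : ∀ s, G.Adj t s → s ∈ Vsrc) :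
    nearestSources Vsrc G t = G.neighborFinset t := by
  ext s
  simp only [nearestSources, mem_filter, mem_erase, mem_neighborFinset]
  constructor
  · rintro ⟨⟨⟨hst, hs⟩, hreach⟩, hmin⟩
    have hu := hreach.some.adj_snd (Walk.not_nil_of_ne hst.symm)
    have hle : G.dist t s ≤ 1 :=
      dist_eq_one_iff_adj.mpr hu ▸ hmin _ ⟨⟨hu.ne', hsrc _ hu⟩, hu.reachable⟩
    exact dist_eq_one_iff_adj.mp (le_antisymm hle (hreach.pos_dist_of_ne hst.symm))
  · intro h
    refine ⟨⟨⟨h.ne', hsrc s h⟩, h.reachable⟩, ?_⟩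
    rintro s' ⟨⟨hs't, -⟩, hreach⟩
    exact dist_eq_one_iff_adj.mpr h ▸ hreach.pos_dist_of_ne hs't.symm

theorem sum_neighborFinset_ite_sym2_eq {M : Type*} [AddCommMonoid M] {G : SimpleGraph V}
    {i j : V} (hij : G.Adj i j) (c : M) (t : V) :
    ∑ s ∈ G.neighborFinset t, (if s(i, j) = s(s, t) then c else 0) =
      (if t = i then c else 0) + (if t = j then c else 0) := by
  have hcond (s : V) : s(i, j) = s(s, t) ↔ t = i ∧ s = j ∨ t = j ∧ s = i := by
    grind [Sym2.eq_iff]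
  simp_rw [hcond]
  rcases eq_or_ne t i with rfl | hti
  · simp [hij.ne, hij]
  rcases eq_or_ne t j with rfl | htj
  · simp [hij.symm, hti]
  · simp [hti, htj]

theorem eload_univ_univ (G : SimpleGraph V) (e : Sym2 V) :
    eload univ univ G e =
      ∑ t, ∑ s ∈ G.neighborFinset t, if e = s(s, t) then 1 / (G.degree t : ℝ) else 0 := by
  refine sum_congr rfl fun t _ => ?_
  rw [nearestSources_eq_neighborFinset fun s _ => mem_univ s, card_neighborFinset_eq_degree]
  refine sum_congr rfl fun s hs => ?_
  have hst : G.Adj s t := ((mem_neighborFinset G t s).mp hs).symm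
  rw [numSP_of_adj hst, numSPthru_of_adj hst]
  split_ifs <;> simp

/-- When every vertex is both a source and a load, the load of any edge `{i,j}` of any
subgraph `G` of `G₀` is `1/deg_G(i) + 1/deg_G(j)`. -/
theorem eload_eq_inv_degree_add_inv_degree {V : Type*} [Fintype V] [DecidableEq V]
    (G0 : SimpleGraph V) :
    ∀ G : SimpleGraph V, G ≤ G0 → ∀ i j : V, G.Adj i j →
      eload Finset.univ Finset.univ G s(i, j) =
        1 / (G.degree i : ℝ) + 1 / (G.degree j : ℝ) := by
  intro G _ i j hij
  simp_rw [eload_univ_univ, sum_neighborFinset_ite_sym2_eq hij, sum_add_distrib]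
  rw [sum_ite_eq' univ i, sum_ite_eq' univ j]
  simp only [mem_univ, if_true]

end
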